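/- arXiv:2203.01592 — 5 statements merged into one kernel-verified Lean document; each statement's English description precedes it below -/
import Mathlib

section
/- Let A : ℕ → (0,∞) be a non-decreasing function such that the series ∑_{i=1}^∞ 1/A(i) diverges. Then the series ∑_{i=1}^∞ min(1/A(i), 1/i) also diverges. -/
/-!
By Cauchy condensation, `∑ min (a n) (1 / n)` converges iff `∑ min (2 ^ k * a (2 ^ k)) 1` does.
The terms of the latter tend to `0`, so eventually the cap `1` is inactive and this is the
condensed series of `a`; condensing back gives the convergence of `∑ a n`.
-/

open Filter

theorem summable_of_summable_min_one {ι : Type*} {f : ι → ℝ}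
    (h : Summable fun i => min (f i) 1) : Summable f := by
  have h_lt : ∀ᶠ i in cofinite, min (f i) 1 < 1 :=
    h.tendsto_cofinite_zero.eventually_lt_const one_pos
  refine h.congr_cofinite (h_lt.mono fun i hi => ?_)
  exact min_eq_left (min_lt_iff.mp hi |>.resolve_right (lt_irrefl 1)).le

theorem summable_of_summable_min_one_div {a : ℕ → ℝ} (h_nonneg : 0 ≤ᶠ[atTop] a)
    (h_mono : ∀ᶠ n in atTop, a (n + 1) ≤ a n)
    (h : Summable fun n : ℕ => min (a n) (1 / n)) : Summable a := by
  have hb_nonneg : 0 ≤ᶠ[atTop] fun n : ℕ => min (a n) (1 / n) :=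
    h_nonneg.mono fun n hn => le_min hn (by positivity)
  have hb_mono :
      ∀ᶠ n : ℕ in atTop, min (a (n + 1)) (1 / ↑(n + 1)) ≤ min (a n) (1 / n) := by
    filter_upwards [h_mono, eventually_gt_atTop 0] with n hn hn_pos
    exact min_le_min hn (one_div_le_one_div_of_le (by positivity) (by push_cast; linarith))
  have h_condensed : Summable fun k : ℕ => min ((2 : ℝ) ^ k * a (2 ^ k)) 1 := by
    refine ((summable_condensed_iff_of_eventually_nonneg hb_nonneg hb_mono).mpr h).congr
      fun k => ?_
    rw [mul_min_of_nonneg _ _ (by positivity)]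
    push_cast
    rw [mul_one_div_cancel (by positivity)]
  exact (summable_condensed_iff_of_eventually_nonneg h_nonneg h_mono).mp
    (summable_of_summable_min_one h_condensed)

theorem stmt_0 (A : ℕ → ℝ) (hmono : Monotone A)
    (hpos : ∀ i, 1 ≤ i → 0 < A i)
    (hdiv : ¬ Summable (fun i : ℕ => 1 / A (i + 1))) :
    ¬ Summable (fun i : ℕ => min (1 / A (i + 1)) (1 / (i + 1 : ℝ))) := by
  intro h
  have h_nonneg : 0 ≤ᶠ[atTop] fun n => 1 / A n :=
    (eventually_ge_atTop 1).mono fun n hn => (one_div_pos.mpr (hpos n hn)).le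
  have h_anti : ∀ᶠ n in atTop, 1 / A (n + 1) ≤ 1 / A n :=
    (eventually_ge_atTop 1).mono fun n hn =>
      one_div_le_one_div_of_le (hpos n hn) (hmono n.le_succ)
  have h_min : Summable fun n : ℕ => min (1 / A n) (1 / n) :=
    (summable_nat_add_iff 1).mp (by exact_mod_cast h)
  exact hdiv ((summable_nat_add_iff 1).mpr
    (summable_of_summable_min_one_div h_nonneg h_anti h_min))
end

section
/- Let A : ℕ → ℝ be non-decreasing with A(i) ≥ i for all i ≥ 1, set 𝒜(n) = ∑_{z=1}^n 1/A(z) and a_n = n!/𝒜(n)^n for n ≥ 1. Then a_{n+1}/a_n → ∞ as n → ∞; in particular there exists a constant C_a > 1 such that ∑_{i=j}^∞ 1/a_i ≤ C_a/a_j for all j ∈ ℕ. -/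
/-!
Writing `S = 𝒜`, the ratio is `a (n+1) / a n = (n+1) / S (n+1) * (S n / S (n+1)) ^ n`.
Since `S (n+1) - S n = 1 / A (n+1) ≤ 1 / (n+1)` and `S n ≥ 1 / A 1`, the second factor is at
least `(1 + A 1 / (n+1)) ^ (-n) ≥ exp (-A 1)`, while `S n / n → 0` by Cesàro because
`1 / A n → 0`. So the ratio tends to infinity; from some point on `a (n+1) ≥ 2 a n`, the tails
of `∑ 1 / a i` are then dominated by geometric series, and the finitely many remaining `j` only
enlarge the constant.
-/

open Filter Finset Real Topology

theorem tsum_le_div_one_sub_of_le_mul {b : ℕ → ℝ} {q : ℝ} (hb : ∀ n, 0 ≤ b n) (hq₀ : 0 ≤ q)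
    (hq₁ : q < 1) (h : ∀ n, b (n + 1) ≤ q * b n) : ∑' n, b n ≤ b 0 / (1 - q) := by
  have hgeom : ∀ n, b n ≤ b 0 * q ^ n := by
    intro n
    induction n with
    | zero => simp
    | succ n ih =>
      calc b (n + 1) ≤ q * b n := h n
        _ ≤ q * (b 0 * q ^ n) := by gcongr
        _ = b 0 * q ^ (n + 1) := by ring
  have hsummable : Summable fun n => b 0 * q ^ n :=
    (summable_geometric_of_lt_one hq₀ hq₁).mul_left _
  calc ∑' n, b n ≤ ∑' n, b 0 * q ^ n :=
        (hsummable.of_nonneg_of_le hb hgeom).tsum_le_tsum hgeom hsummable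
    _ = b 0 / (1 - q) := by
        rw [tsum_mul_left, tsum_geometric_of_lt_one hq₀ hq₁, div_eq_mul_inv]

theorem exists_tsum_one_div_le_of_tendsto_ratio {a : ℕ → ℝ} (hpos : ∀ n, 0 < a n)
    (h : Tendsto (fun n => a (n + 1) / a n) atTop atTop) :
    ∃ C, 1 < C ∧ ∀ j, ∑' i, 1 / a (j + i) ≤ C / a j := by
  have htail : ∀ᶠ j in atTop, (∑' i, 1 / a (j + i)) * a j ≤ 2 := by
    filter_upwards [eventually_forall_ge_atTop.2 (h.eventually_ge_atTop 2)] with j hj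
    have hstep : ∀ i, 1 / a (j + (i + 1)) ≤ 1 / 2 * (1 / a (j + i)) := by
      intro i
      have hdouble := hj (j + i) (by omega)
      rw [le_div_iff₀ (hpos _)] at hdouble
      rw [← add_assoc, one_div_mul_one_div]
      exact one_div_le_one_div_of_le (by linarith [hpos (j + i)]) hdouble
    have hsum := tsum_le_div_one_sub_of_le_mul (fun i => (one_div_pos.2 (hpos (j + i))).le)
      (by norm_num) (by norm_num) hstep
    rw [← le_div_iff₀ (hpos j)]
    refine hsum.trans_eq ?_
    rw [add_zero]
    ring
  obtain ⟨M, hM⟩ := (isBoundedUnder_of_eventually_le htail).bddAbove_range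
  refine ⟨max 2 M, one_lt_two.trans_le (le_max_left _ _), fun j => ?_⟩
  rw [le_div_iff₀ (hpos j)]
  exact (hM ⟨j, rfl⟩).trans (le_max_right _ _)

/-- The paper's `𝒜(n)`. -/
noncomputable def recipSum (A : ℕ → ℝ) (n : ℕ) : ℝ := ∑ z ∈ Icc 1 n, 1 / A z

/-- The paper's `a_n` (equal to `1` at `n = 0`). -/
noncomputable def factorialDivPow (A : ℕ → ℝ) (n : ℕ) : ℝ :=
  (Nat.factorial n : ℝ) / recipSum A n ^ n

theorem recipSum_succ (A : ℕ → ℝ) (n : ℕ) : recipSum A (n + 1) = recipSum A n + 1 / A (n + 1) :=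
  sum_Icc_succ_top (by omega) _

theorem recipSum_eq_sum_range (A : ℕ → ℝ) (n : ℕ) :
    recipSum A n = ∑ i ∈ range n, 1 / A (i + 1) := by
  induction n with
  | zero => rfl
  | succ n ih => rw [recipSum_succ, ih, sum_range_succ]

section

variable {A : ℕ → ℝ}

theorem pos_of_natCast_le (hA : ∀ i : ℕ, 1 ≤ i → (i : ℝ) ≤ A i) {z : ℕ} (hz : 1 ≤ z) :
    0 < A z :=
  (Nat.cast_pos.2 hz).trans_le (hA z hz)

theorem one_div_le_recipSum (hA : ∀ i : ℕ, 1 ≤ i → (i : ℝ) ≤ A i) {n : ℕ} (hn : 1 ≤ n) :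
    1 / A 1 ≤ recipSum A n :=
  single_le_sum (f := fun z => 1 / A z)
    (fun _ hz => (one_div_pos.2 (pos_of_natCast_le hA (mem_Icc.1 hz).1)).le)
    (mem_Icc.2 ⟨le_rfl, hn⟩)

theorem recipSum_pos (hA : ∀ i : ℕ, 1 ≤ i → (i : ℝ) ≤ A i) {n : ℕ} (hn : 1 ≤ n) :
    0 < recipSum A n :=
  (one_div_pos.2 (pos_of_natCast_le hA le_rfl)).trans_le (one_div_le_recipSum hA hn)

theorem recipSum_succ_le_mul (hA : ∀ i : ℕ, 1 ≤ i → (i : ℝ) ≤ A i) {n : ℕ} (hn : 1 ≤ n) :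
    recipSum A (n + 1) ≤ recipSum A n * (1 + A 1 / (n + 1)) := by
  have hA₁ := pos_of_natCast_le hA le_rfl
  have hlast : 1 / A (n + 1) ≤ 1 / ((n : ℝ) + 1) :=
    one_div_le_one_div_of_le (by positivity) (by exact_mod_cast hA (n + 1) (by omega))
  have hfirst : 1 ≤ recipSum A n * A 1 := by
    have := one_div_le_recipSum hA hn
    rwa [div_le_iff₀ hA₁] at this
  calc recipSum A (n + 1) = recipSum A n + 1 / A (n + 1) := recipSum_succ A n
    _ ≤ recipSum A n + recipSum A n * A 1 * (1 / (n + 1)) := by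
        gcongr
        exact hlast.trans (le_mul_of_one_le_left (by positivity) hfirst)
    _ = recipSum A n * (1 + A 1 / (n + 1)) := by ring

theorem one_add_div_succ_pow_le_exp {x : ℝ} (hx : 0 ≤ x) (n : ℕ) :
    (1 + x / (n + 1)) ^ n ≤ exp x := by
  calc (1 + x / (n + 1)) ^ n ≤ exp (x / (n + 1)) ^ n := by
        gcongr
        linarith [add_one_le_exp (x / (n + 1))]
    _ = exp (n * (x / (n + 1))) := (exp_nat_mul _ n).symm
    _ ≤ exp x := by
        gcongr
        rw [mul_div_assoc', div_le_iff₀ (by positivity)]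
        nlinarith

theorem recipSum_succ_pow_le (hA : ∀ i : ℕ, 1 ≤ i → (i : ℝ) ≤ A i) {n : ℕ} (hn : 1 ≤ n) :
    recipSum A (n + 1) ^ n ≤ exp (A 1) * recipSum A n ^ n := by
  have hA₁ := pos_of_natCast_le hA le_rfl
  calc recipSum A (n + 1) ^ n ≤ (recipSum A n * (1 + A 1 / (n + 1))) ^ n := by
        gcongr
        · exact (recipSum_pos hA (by omega)).le
        · exact recipSum_succ_le_mul hA hn
    _ = recipSum A n ^ n * (1 + A 1 / (n + 1)) ^ n := mul_pow _ _ _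
    _ ≤ recipSum A n ^ n * exp (A 1) := by
        have := recipSum_pos hA hn
        gcongr
        exact one_add_div_succ_pow_le_exp hA₁.le n
    _ = exp (A 1) * recipSum A n ^ n := mul_comm _ _

theorem tendsto_div_recipSum_atTop (hA : ∀ i : ℕ, 1 ≤ i → (i : ℝ) ≤ A i) :
    Tendsto (fun n : ℕ => (n : ℝ) / recipSum A n) atTop atTop := by
  have hterm : Tendsto (fun i : ℕ => 1 / A (i + 1)) atTop (𝓝 0) := by
    refine squeeze_zero (fun i => (one_div_pos.2 (pos_of_natCast_le hA (by omega))).le)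
      (fun i => one_div_le_one_div_of_le (by positivity) ?_)
      tendsto_one_div_add_atTop_nhds_zero_nat
    exact_mod_cast hA (i + 1) (by omega)
  have hmean : Tendsto (fun n : ℕ => (n : ℝ)⁻¹ * recipSum A n) atTop (𝓝[>] 0) := by
    refine tendsto_nhdsWithin_iff.2 ⟨?_, ?_⟩
    · simpa only [recipSum_eq_sum_range] using hterm.cesaro
    · filter_upwards [eventually_ge_atTop 1] with n hn
      exact mul_pos (by positivity) (recipSum_pos hA hn)
  refine hmean.inv_tendsto_nhdsGT_zero.congr fun n => ?_
  simp only [Pi.inv_apply, mul_inv, inv_inv, div_eq_mul_inv, mul_comm]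

theorem factorialDivPow_pos (hA : ∀ i : ℕ, 1 ≤ i → (i : ℝ) ≤ A i) (n : ℕ) :
    0 < factorialDivPow A n := by
  rcases n with _ | n
  · simp [factorialDivPow]
  · have := recipSum_pos hA (Nat.succ_pos n)
    unfold factorialDivPow
    positivity

theorem exp_neg_mul_le_factorialDivPow_succ_div (hA : ∀ i : ℕ, 1 ≤ i → (i : ℝ) ≤ A i) {n : ℕ}
    (hn : 1 ≤ n) :
    exp (-A 1) * ((n + 1) / recipSum A (n + 1)) ≤
      factorialDivPow A (n + 1) / factorialDivPow A n := by
  have hS := recipSum_pos hA hn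
  have hS' := recipSum_pos hA (n := n + 1) (by omega)
  have hratio : factorialDivPow A (n + 1) / factorialDivPow A n =
      (n + 1) * recipSum A n ^ n / recipSum A (n + 1) ^ (n + 1) := by
    simp only [factorialDivPow, Nat.factorial_succ, Nat.cast_mul, Nat.cast_succ]
    field_simp
  have hpow : exp (-A 1) * recipSum A (n + 1) ^ n ≤ recipSum A n ^ n := by
    rw [exp_neg, inv_mul_le_iff₀ (exp_pos _)]
    exact recipSum_succ_pow_le hA hn
  calc exp (-A 1) * ((n + 1) / recipSum A (n + 1))
      = (n + 1) * (exp (-A 1) * recipSum A (n + 1) ^ n) / recipSum A (n + 1) ^ (n + 1) := by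
        field_simp
        ring
    _ ≤ (n + 1) * recipSum A n ^ n / recipSum A (n + 1) ^ (n + 1) := by gcongr
    _ = factorialDivPow A (n + 1) / factorialDivPow A n := hratio.symm

theorem tendsto_factorialDivPow_succ_div_atTop (hA : ∀ i : ℕ, 1 ≤ i → (i : ℝ) ≤ A i) :
    Tendsto (fun n => factorialDivPow A (n + 1) / factorialDivPow A n) atTop atTop := by
  have hlower := ((tendsto_div_recipSum_atTop hA).comp (tendsto_add_atTop_nat 1)).const_mul_atTop
    (exp_pos (-A 1))
  refine tendsto_atTop_mono' atTop ?_ hlower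
  filter_upwards [eventually_ge_atTop 1] with n hn
  simpa using exp_neg_mul_le_factorialDivPow_succ_div hA hn

end

theorem stmt_4_general (A : ℕ → ℝ)
    (hA : ∀ i : ℕ, 1 ≤ i → (i : ℝ) ≤ A i)
    (a : ℕ → ℝ)
    (ha : ∀ n, 1 ≤ n → a n = (Nat.factorial n : ℝ) / (∑ z ∈ Finset.Icc 1 n, 1 / A z) ^ n) :
    Filter.Tendsto (fun n => a (n + 1) / a n) Filter.atTop Filter.atTop ∧
      ∃ C : ℝ, 1 < C ∧ ∀ j : ℕ, 1 ≤ j → ∑' i : ℕ, 1 / a (j + i) ≤ C / a j := by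
  have ha' : ∀ n, 1 ≤ n → a n = factorialDivPow A n := ha
  have hratio := tendsto_factorialDivPow_succ_div_atTop hA
  obtain ⟨C, hC, htail⟩ :=
    exists_tsum_one_div_le_of_tendsto_ratio (factorialDivPow_pos hA) hratio
  refine ⟨hratio.congr' ?_, C, hC, fun j hj => ?_⟩
  · filter_upwards [eventually_ge_atTop 1] with n hn
    rw [ha' n hn, ha' (n + 1) (by omega)]
  · rw [ha' j hj, tsum_congr fun i => by rw [ha' (j + i) (by omega)]]
    exact htail j

theorem stmt_4 (A : ℕ → ℝ) (hmono : Monotone A)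
    (hA : ∀ i : ℕ, 1 ≤ i → (i : ℝ) ≤ A i)
    (a : ℕ → ℝ)
    (ha : ∀ n, 1 ≤ n → a n = (Nat.factorial n : ℝ) / (∑ z ∈ Finset.Icc 1 n, 1 / A z) ^ n) :
    Filter.Tendsto (fun n => a (n + 1) / a n) Filter.atTop Filter.atTop ∧
      ∃ C : ℝ, 1 < C ∧ ∀ j : ℕ, 1 ≤ j → ∑' i : ℕ, 1 / a (j + i) ≤ C / a j :=
  stmt_4_general A hA a ha
end

section
/- Let (ψ_x)_{x∈ℤ₊} be independent ℤ₊-valued random variables. If ∑_{m=1}^∞ ∏_{i=0}^m (1 − P(ψ_{m−i} > i)) < ∞, then almost surely only finitely many of the events {Y_m = 0} occur, where Y_m = max_{0≤j≤m}(ψ_{m−j} − j) ∨ 0; consequently the TADIBP system percolates almost surely. -/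
/-!
The event `Y_m = 0` says that `ψ x ≤ m - x` for every site `x ≤ m`. By independence its
probability is exactly the `m`-th term of the series in the hypothesis, so by Borel–Cantelli
almost surely only finitely many of these events occur.
-/

open MeasureTheory ProbabilityTheory Filter Finset

namespace Percolation

variable {Ω ι : Type*}

theorem measure_biInter_le_eq_prod [MeasurableSpace Ω] {μ : Measure Ω} [IsProbabilityMeasure μ]
    {ψ : ι → Ω → ℕ} (hmeas : ∀ x, Measurable (ψ x))
    (hindep : iIndepFun ψ μ) (S : Finset ι) (t : ι → ℕ) :
    μ (⋂ x ∈ S, {ω | ψ x ω ≤ t x}) = ∏ x ∈ S, (1 - μ {ω | t x < ψ x ω}) := by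
  rw [hindep.meas_biInter (s := fun x => {ω | ψ x ω ≤ t x})
    fun x _ => ⟨Set.Iic (t x), measurableSet_Iic, rfl⟩]
  refine prod_congr rfl fun x _ => ?_
  rw [← prob_compl_eq_one_sub (measurableSet_lt measurable_const (hmeas x))]
  simp only [Set.compl_ofPred, not_lt]

/-- The event `Y_m = 0`: no site `x ≤ m` reaches `m`. -/
def blocked (ψ : ℕ → Ω → ℕ) (m : ℕ) : Set Ω :=
  ⋂ x ∈ range (m + 1), {ω | ψ x ω ≤ m - x}

theorem measure_blocked [MeasurableSpace Ω] {μ : Measure Ω} [IsProbabilityMeasure μ]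
    {ψ : ℕ → Ω → ℕ} (hmeas : ∀ x, Measurable (ψ x))
    (hindep : iIndepFun ψ μ) (m : ℕ) :
    μ (blocked ψ m) = ∏ j ∈ range (m + 1), (1 - μ {ω | j < ψ (m - j) ω}) := by
  rw [blocked, measure_biInter_le_eq_prod hmeas hindep, ← prod_range_reflect]
  refine prod_congr rfl fun j hj => ?_
  have hjm : j ≤ m := Nat.lt_succ_iff.mp (mem_range.mp hj)
  rw [Nat.add_sub_cancel, Nat.sub_sub_self hjm]

theorem pos_sup_of_notMem_blocked {ψ : ℕ → Ω → ℕ} {m : ℕ} {ω : Ω} (h : ω ∉ blocked ψ m) :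
    0 < (range (m + 1)).sup (fun j => ψ (m - j) ω - j) := by
  simp only [blocked, Set.mem_iInter, Set.mem_ofPred_eq, not_forall, not_le] at h
  obtain ⟨x, hx, hreach⟩ := h
  have hxm : x ≤ m := Nat.lt_succ_iff.mp (mem_range.mp hx)
  refine Finset.lt_sup_iff.mpr ⟨m - x, mem_range.mpr (by omega), ?_⟩
  rw [Nat.sub_sub_self hxm]
  omega

end Percolation

open Percolation in
theorem stmt_12 {Ω : Type*} [MeasurableSpace Ω] (μ : Measure Ω) [IsProbabilityMeasure μ]
    (ψ : ℕ → Ω → ℕ) (hmeas : ∀ x, Measurable (ψ x))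
    (hindep : iIndepFun ψ μ)
    (hconv : (∑' m : ℕ, ∏ i ∈ Finset.range (m + 1), (1 - μ {ω | i < ψ (m - i) ω})) ≠ ⊤) :
    ∀ᵐ ω ∂μ, ∃ x₀ : ℕ, ∀ m, x₀ ≤ m →
      0 < (Finset.range (m + 1)).sup (fun j => ψ (m - j) ω - j) := by
  have hsum : ∑' m, μ (blocked ψ m) ≠ ⊤ := by
    simpa only [measure_blocked hmeas hindep] using hconv
  filter_upwards [ae_eventually_notMem hsum] with ω hω
  obtain ⟨x₀, hx₀⟩ := eventually_atTop.mp hω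
  exact ⟨x₀, fun m hm => pos_sup_of_notMem_blocked (hx₀ m hm)⟩
end

section
/- Let A : ℕ → (1,∞) be non-decreasing with ∑_{z=1}^∞ 1/A(z) < ∞, and define E₂(i,m) = (1/(e·√(i+1))) · (e^{1 − 1/A(m+1)}/(2A(m+1)))^{i+1}. Then there exists m₀ ∈ ℕ such that for all m ≥ m₀ and all 0 ≤ i ≤ m, E₂(i,m) ≥ (1/(2A(m+1)))^{i+2}. -/
/-!
Once `A (m + 1) ≥ 2` (true eventually, since `1 / A z → 0`), the claim reduces to
`e √(i+1) ≤ 2 A(m+1) · exp ((1 - 1/A(m+1)) (i+1))`, which follows from `e ≤ 2 A(m+1)`,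
`1 - 1/A(m+1) ≥ 1/2` and `√x ≤ exp (x/2)`.
-/

open Real

lemma Real.sqrt_le_exp_half (x : ℝ) : √x ≤ exp (x / 2) := by
  rw [exp_half]
  exact sqrt_le_sqrt (by linarith [add_one_le_exp x])

lemma Real.exp_one_mul_sqrt_le {a x : ℝ} (ha : 2 ≤ a) (hx : 0 ≤ x) :
    exp 1 * √x ≤ 2 * a * exp ((1 - 1 / a) * x) := by
  have he : exp 1 ≤ 2 * a := by linarith [exp_one_lt_d9]
  have hexp : exp (x / 2) ≤ exp ((1 - 1 / a) * x) := by
    have : 1 / a ≤ 1 / 2 := one_div_le_one_div_of_le two_pos ha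
    gcongr
    nlinarith
  calc exp 1 * √x ≤ 2 * a * exp (x / 2) := by
        gcongr
        exact sqrt_le_exp_half x
    _ ≤ 2 * a * exp ((1 - 1 / a) * x) := by gcongr

lemma one_div_two_mul_pow_le {a : ℝ} (ha : 2 ≤ a) (i : ℕ) :
    (1 / (2 * a)) ^ (i + 2) ≤
      1 / (exp 1 * √(i + 1)) * (exp (1 - 1 / a) / (2 * a)) ^ (i + 1) := by
  have key := exp_one_mul_sqrt_le ha (x := i + 1) (by positivity)
  have hpow : exp (1 - 1 / a) ^ (i + 1) = exp ((1 - 1 / a) * (i + 1)) := by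
    rw [← exp_nat_mul]; push_cast; ring_nf
  rw [div_pow, div_pow, hpow, one_pow, pow_succ _ (i + 1), one_div_mul_eq_div, div_div,
    div_le_div_iff₀ (by positivity) (by positivity)]
  calc 1 * ((2 * a) ^ (i + 1) * (exp 1 * √(i + 1)))
      ≤ (2 * a) ^ (i + 1) * (2 * a * exp ((1 - 1 / a) * (i + 1))) := by rw [one_mul]; gcongr
    _ = exp ((1 - 1 / a) * (i + 1)) * ((2 * a) ^ (i + 1) * (2 * a)) := by ring

theorem stmt_14_general (A : ℕ → ℝ)
    (hA : ∀ z : ℕ, 1 ≤ z → 1 < A z)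
    (hsum : Summable (fun z : ℕ => 1 / A (z + 1))) :
    ∃ m₀ : ℕ, ∀ m, m₀ ≤ m → ∀ i : ℕ, i ≤ m →
      (1 / (Real.exp 1 * Real.sqrt (i + 1))) *
          (Real.exp (1 - 1 / A (m + 1)) / (2 * A (m + 1))) ^ (i + 1) ≥
        (1 / (2 * A (m + 1))) ^ (i + 2) := by
  obtain ⟨m₀, hm₀⟩ := Filter.eventually_atTop.mp
    (hsum.tendsto_atTop_zero.eventually (gt_mem_nhds (by norm_num : (0 : ℝ) < 1 / 2)))
  refine ⟨m₀, fun m hm i _ => one_div_two_mul_pow_le ?_ i⟩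
  have hpos : 0 < A (m + 1) := one_pos.trans (hA _ m.succ_pos)
  have := hm₀ m hm
  rw [div_lt_div_iff₀ hpos two_pos] at this
  linarith

theorem stmt_14 (A : ℕ → ℝ) (hmono : Monotone A)
    (hA : ∀ z : ℕ, 1 ≤ z → 1 < A z)
    (hsum : Summable (fun z : ℕ => 1 / A (z + 1))) :
    ∃ m₀ : ℕ, ∀ m, m₀ ≤ m → ∀ i : ℕ, i ≤ m →
      (1 / (Real.exp 1 * Real.sqrt (i + 1))) *
          (Real.exp (1 - 1 / A (m + 1)) / (2 * A (m + 1))) ^ (i + 1) ≥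
        (1 / (2 * A (m + 1))) ^ (i + 2) :=
  stmt_14_general A hA hsum
end

section
/- Suppose X is a random variable with P(X ≥ t) = t^{−a} for t ≥ 1, where a ∈ (0,1), and let A(m) = m^α with α > 1, ρ > 1. Then for some c > 0 and all large m, ∑_{i=1}^m P(X ≥ αρi·ln m) ≥ c·m^{1−a}/((1−a)·(αρ·ln m)^a), and hence ∑_{m=1}^∞ exp(−∑_{i=1}^m P(e^X > m^{αρi})) < ∞. -/
/-!
Each of the `m` terms `(b * i) ^ (-a)`, `1 ≤ i ≤ m`, is at least `(b * m) ^ (-a)`, so the sum is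
at least `m ^ (1 - a) * b ^ (-a)`; with `b = αρ log m` and the Pareto tail this is the first claim.
The strict events `{m ^ (αρi) < e ^ X} = {αρi log m < X}` contain `{2αρi log m ≤ X}`, so the same
bound holds for them with `b = 2αρ log m`. Since `(log m) ^ (1 + a) = o(m ^ (1 - a))`, that sum
eventually exceeds `2 log m`, so the terms of the series are eventually at most `m ^ (-2)`.
-/

open MeasureTheory Filter Finset Real

lemma rpow_one_sub_mul_rpow_neg_le_sum {a b : ℝ} (ha : 0 ≤ a) (hb : 0 < b) {m : ℕ} (hm : 0 < m) :
    (m : ℝ) ^ (1 - a) * b ^ (-a) ≤ ∑ i ∈ Icc 1 m, (b * i) ^ (-a) := by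
  have hm' : (0 : ℝ) < m := by exact_mod_cast hm
  have hterm : ∀ i ∈ Icc 1 m, (b * m) ^ (-a) ≤ (b * i) ^ (-a) := fun i hi => by
    obtain ⟨hi1, him⟩ := mem_Icc.1 hi
    have hi1' : (1 : ℝ) ≤ i := by exact_mod_cast hi1
    exact rpow_le_rpow_of_nonpos (by positivity)
      (mul_le_mul_of_nonneg_left (by exact_mod_cast him) hb.le) (neg_nonpos.2 ha)
  calc (m : ℝ) ^ (1 - a) * b ^ (-a) = (Icc 1 m).card • (b * m) ^ (-a) := by
        rw [Nat.card_Icc, nsmul_eq_mul, mul_rpow hb.le hm'.le, sub_eq_add_neg,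
          rpow_add hm', rpow_one]
        push_cast
        ring
    _ ≤ ∑ i ∈ Icc 1 m, (b * i) ^ (-a) := card_nsmul_le_sum _ _ _ hterm

lemma eventually_one_le_mul_log {κ : ℝ} (hκ : 0 < κ) : ∀ᶠ m : ℕ in atTop, 1 ≤ κ * log m :=
  ((tendsto_log_atTop.comp tendsto_natCast_atTop_atTop).const_mul_atTop hκ).eventually_ge_atTop 1

lemma eventually_two_mul_log_le_rpow_mul_rpow_neg {a κ : ℝ} (ha : a < 1) (hκ : 0 < κ) :
    ∀ᶠ x : ℝ in atTop, 2 * log x ≤ x ^ (1 - a) * (κ * log x) ^ (-a) := by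
  have hε : 0 < κ ^ (-a) / 2 := by positivity
  filter_upwards [((isLittleO_log_rpow_rpow_atTop (s := 1 - a) (1 + a) (by linarith)).bound hε),
    tendsto_log_atTop.eventually_gt_atTop 0, eventually_gt_atTop 0] with x hx hlog hx0
  rw [norm_of_nonneg (by positivity), norm_of_nonneg (by positivity)] at hx
  calc 2 * log x = 2 * (log x ^ (1 + a) * log x ^ (-a)) := by
        rw [← rpow_add hlog, add_neg_cancel_right, rpow_one]
    _ ≤ 2 * (κ ^ (-a) / 2 * x ^ (1 - a) * log x ^ (-a)) := by gcongr
    _ = x ^ (1 - a) * (κ * log x) ^ (-a) := by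
        rw [mul_rpow hκ.le hlog.le]
        ring

lemma summable_exp_neg_of_eventually_two_mul_log_le {f : ℕ → ℝ}
    (hf : ∀ᶠ m : ℕ in atTop, 2 * log m ≤ f m) : Summable (fun m => exp (-f m)) := by
  refine Summable.of_norm_bounded_eventually_nat (g := fun m : ℕ => (m : ℝ) ^ (-2 : ℝ))
    (summable_nat_rpow.2 (by norm_num)) ?_
  filter_upwards [hf, eventually_gt_atTop 0] with m hm hm0
  have hm0' : (0 : ℝ) < m := by exact_mod_cast hm0
  rw [norm_of_nonneg (exp_pos _).le, rpow_def_of_pos hm0']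
  exact exp_le_exp.2 (by linarith)

section Pareto

variable {Ω : Type*} [MeasurableSpace Ω] {μ : Measure Ω} {X : Ω → ℝ} {a : ℝ}

lemma rpow_neg_two_mul_le_measure_lt [IsFiniteMeasure μ]
    (hpareto : ∀ t : ℝ, 1 ≤ t → (μ {ω | t ≤ X ω}).toReal = t ^ (-a)) {t : ℝ} (ht : 1 ≤ 2 * t) :
    (2 * t) ^ (-a) ≤ (μ {ω | t < X ω}).toReal := by
  rw [← hpareto _ ht]
  exact ENNReal.toReal_mono (measure_ne_top μ _)
    (measure_mono fun ω (hω : 2 * t ≤ X ω) => show t < X ω by linarith)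

lemma rpow_one_sub_mul_rpow_neg_le_sum_measure_le (ha : 0 ≤ a)
    (hpareto : ∀ t : ℝ, 1 ≤ t → (μ {ω | t ≤ X ω}).toReal = t ^ (-a))
    {b : ℝ} (hb : 1 ≤ b) {m : ℕ} (hm : 0 < m) :
    (m : ℝ) ^ (1 - a) * b ^ (-a) ≤ ∑ i ∈ Icc 1 m, (μ {ω | b * i ≤ X ω}).toReal := by
  refine (rpow_one_sub_mul_rpow_neg_le_sum ha (by linarith) hm).trans_eq (sum_congr rfl ?_)
  intro i hi
  have hi1 : (1 : ℝ) ≤ i := by exact_mod_cast (mem_Icc.1 hi).1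
  exact (hpareto _ (by nlinarith)).symm

lemma rpow_one_sub_mul_rpow_neg_le_sum_measure_lt [IsFiniteMeasure μ] (ha : 0 ≤ a)
    (hpareto : ∀ t : ℝ, 1 ≤ t → (μ {ω | t ≤ X ω}).toReal = t ^ (-a))
    {b : ℝ} (hb : 1 ≤ b) {m : ℕ} (hm : 0 < m) :
    (m : ℝ) ^ (1 - a) * (2 * b) ^ (-a) ≤ ∑ i ∈ Icc 1 m, (μ {ω | b * i < X ω}).toReal := by
  refine (rpow_one_sub_mul_rpow_neg_le_sum ha (by linarith) hm).trans (sum_le_sum ?_)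
  intro i hi
  have hi1 : (1 : ℝ) ≤ i := by exact_mod_cast (mem_Icc.1 hi).1
  rw [mul_assoc]
  exact rpow_neg_two_mul_le_measure_lt hpareto (by nlinarith)

end Pareto

theorem stmt_18_general {Ω : Type*} [MeasurableSpace Ω] (μ : Measure Ω) [IsProbabilityMeasure μ]
    (X : Ω → ℝ)
    (a : ℝ) (ha0 : 0 < a) (ha1 : a < 1)
    (hpareto : ∀ t : ℝ, 1 ≤ t → (μ {ω | t ≤ X ω}).toReal = t ^ (-a))
    (α ρ : ℝ) (hα : 1 < α) (hρ : 1 < ρ) :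
    (∃ c : ℝ, 0 < c ∧ ∃ M : ℕ, ∀ m : ℕ, M ≤ m →
        c * (m : ℝ) ^ (1 - a) / ((1 - a) * (α * ρ * Real.log m) ^ a) ≤
          ∑ i ∈ Finset.Icc 1 m, (μ {ω | α * ρ * i * Real.log m ≤ X ω}).toReal) ∧
      Summable (fun m : ℕ => Real.exp
        (-(∑ i ∈ Finset.Icc 1 m,
            (μ {ω | (m : ℝ) ^ (α * ρ * i) < Real.exp (X ω)}).toReal))) := by
  have hαρ : 0 < α * ρ := by positivity
  constructor
  · obtain ⟨M, hM⟩ := eventually_atTop.1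
      ((eventually_one_le_mul_log hαρ).and (eventually_gt_atTop 0))
    refine ⟨1 - a, by linarith, M, fun m hm => ?_⟩
    obtain ⟨hb, hm0⟩ := hM m hm
    have hsets : ∀ i : ℕ, {ω | α * ρ * i * log m ≤ X ω} = {ω | α * ρ * log m * i ≤ X ω} :=
      fun i => by simp only [mul_right_comm _ (i : ℝ)]
    simp only [hsets]
    convert rpow_one_sub_mul_rpow_neg_le_sum_measure_le ha0.le hpareto hb hm0 using 1
    rw [rpow_neg (by linarith), mul_div_mul_left _ _ (by linarith : 1 - a ≠ 0), div_eq_mul_inv]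
  · refine summable_exp_neg_of_eventually_two_mul_log_le ?_
    filter_upwards [eventually_one_le_mul_log hαρ, eventually_gt_atTop 0,
      tendsto_natCast_atTop_atTop.eventually
        (eventually_two_mul_log_le_rpow_mul_rpow_neg ha1 (by positivity : 0 < 2 * (α * ρ)))]
      with m hb hm0 hlog
    have hm0' : (0 : ℝ) < m := by exact_mod_cast hm0
    have hsets : ∀ i : ℕ, {ω | (m : ℝ) ^ (α * ρ * i) < exp (X ω)} =
        {ω | α * ρ * log m * i < X ω} := fun i => by
      ext ω
      rw [Set.mem_ofPred_eq, Set.mem_ofPred_eq, rpow_def_of_pos hm0', exp_lt_exp]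
      ring_nf
    simp only [hsets]
    rw [mul_assoc 2] at hlog
    exact hlog.trans (rpow_one_sub_mul_rpow_neg_le_sum_measure_lt ha0.le hpareto hb hm0)

theorem stmt_18 {Ω : Type*} [MeasurableSpace Ω] (μ : Measure Ω) [IsProbabilityMeasure μ]
    (X : Ω → ℝ) (hX : Measurable X)
    (a : ℝ) (ha0 : 0 < a) (ha1 : a < 1)
    (hpareto : ∀ t : ℝ, 1 ≤ t → (μ {ω | t ≤ X ω}).toReal = t ^ (-a))
    (α ρ : ℝ) (hα : 1 < α) (hρ : 1 < ρ) :
    (∃ c : ℝ, 0 < c ∧ ∃ M : ℕ, ∀ m : ℕ, M ≤ m →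
        c * (m : ℝ) ^ (1 - a) / ((1 - a) * (α * ρ * Real.log m) ^ a) ≤
          ∑ i ∈ Finset.Icc 1 m, (μ {ω | α * ρ * i * Real.log m ≤ X ω}).toReal) ∧
      Summable (fun m : ℕ => Real.exp
        (-(∑ i ∈ Finset.Icc 1 m,
            (μ {ω | (m : ℝ) ^ (α * ρ * i) < Real.exp (X ω)}).toReal))) :=
  stmt_18_general μ X a ha0 ha1 hpareto α ρ hα hρ
end
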